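/- Let s > d/2. There exists c = c(d,s) > 0 such that ‖fg‖_{H^s} ≤ c‖f‖_{X^s}‖g‖_{H^s} for all f ∈ X^s(ℝ^d) and g ∈ H^s(ℝ^d); in particular multiplication by an element of X^s(ℝ^d) is a bounded operator on H^s(ℝ^d). -/

import Mathlib

/-!
On the Fourier side the product becomes the convolution `F ∗ G`, and it suffices to bound
`|F| ∗ |G|`. Peetre's inequality `⟨ξ⟩ˢ ≤ 2ˢ (𝟙_{|η| ≥ 1} ⟨η⟩ˢ + ⟨ξ - η⟩ˢ)` (for `|η| < 1` the
second term suffices; the indicator lets `ω_s`, which equals `⟨η⟩²ˢ` only for `|η| ≥ 1`, control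
the first) splits `⟨ξ⟩ˢ (|F| ∗ |G|)` into two convolutions, each bounded in `L²` by Young's
inequality `‖a ∗ b‖₂ ≤ ‖a‖₂ ‖b‖₁`. The `L¹` norms are controlled by
weighted Cauchy–Schwarz: `‖G‖₁² ≤ ∫ ⟨ξ⟩⁻²ˢ · ‖G‖²_{Hˢ}`, finite since `2s > d`, and
`‖F‖₁² ≤ ∫ ω_s⁻¹ · ‖F‖²_{Xˢ}`. The delicate point is the integrability of `ω_s⁻¹` near the origin:
with `ξ = (t, ξ')` and `q = |ξ'|²` one has `ω_s⁻¹(ξ) ≤ 1 + q / (t² + q²)`, and this Cauchy kernel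
integrates to `π` in `t` for every `ξ'`.
-/

open MeasureTheory
open scoped ENNReal NNReal

/-- The anisotropic weight `ω_s` defining the specialized space `X^s(ℝ^d)`. -/
noncomputable def omegaD (d : ℕ) (hd : 0 < d) (s : ℝ) (ξ : EuclideanSpace ℝ (Fin d)) : ℝ :=
  if ‖ξ‖ < 1 then ((ξ ⟨0, hd⟩) ^ 2 + ‖ξ‖ ^ 4) / ‖ξ‖ ^ 2 else (1 + ‖ξ‖ ^ 2) ^ s

theorem ENNReal.add_sq_le (a b : ℝ≥0∞) : (a + b) ^ 2 ≤ 2 * (a ^ 2 + b ^ 2) := by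
  have h := ENNReal.rpow_add_le_mul_rpow_add_rpow a b one_le_two
  rw [show (2 : ℝ) - 1 = 1 by norm_num, ENNReal.rpow_one] at h
  simpa only [ENNReal.rpow_two] using h

section CauchySchwarz
variable {α : Type*} [MeasurableSpace α] {μ : Measure α}

theorem sq_lintegral_mul_le {a b : α → ℝ≥0∞} (ha : AEMeasurable a μ) (hb : AEMeasurable b μ) :
    (∫⁻ x, a x * b x ∂μ) ^ 2 ≤ (∫⁻ x, a x ∂μ) * ∫⁻ x, a x * b x ^ 2 ∂μ := by
  have hsq : ∀ x : ℝ≥0∞, (x ^ (1 / 2 : ℝ)) ^ (2 : ℝ) = x := fun x => by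
    rw [← ENNReal.rpow_mul]; norm_num
  have h := ENNReal.lintegral_mul_le_Lp_mul_Lq μ Real.HolderConjugate.two_two
    (ha.pow_const (1 / 2 : ℝ)) ((ha.pow_const (1 / 2 : ℝ)).mul hb)
  simp only [Pi.mul_apply, ENNReal.mul_rpow_of_nonneg _ _ zero_le_two, hsq] at h
  calc (∫⁻ x, a x * b x ∂μ) ^ 2
      = (∫⁻ x, a x ^ (1 / 2 : ℝ) * (a x ^ (1 / 2 : ℝ) * b x) ∂μ) ^ 2 := by
        simp_rw [← mul_assoc, ← ENNReal.rpow_add_of_nonneg _ _ one_half_pos.le one_half_pos.le]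
        norm_num
    _ ≤ ((∫⁻ x, a x ∂μ) ^ (1 / 2 : ℝ) * (∫⁻ x, a x * b x ^ (2 : ℝ) ∂μ) ^ (1 / 2 : ℝ)) ^ 2 :=
        pow_le_pow_left' h 2
    _ = (∫⁻ x, a x ∂μ) * ∫⁻ x, a x * b x ^ 2 ∂μ := by
        rw [mul_pow, ← ENNReal.rpow_natCast, ← ENNReal.rpow_natCast _ 2, ← ENNReal.rpow_mul,
          ← ENNReal.rpow_mul]
        norm_num

theorem sq_lintegral_le_lintegral_inv_mul {w f : α → ℝ≥0∞} (hw : AEMeasurable w μ)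
    (hf : AEMeasurable f μ) (hw0 : ∀ᵐ x ∂μ, w x ≠ 0) (hwt : ∀ᵐ x ∂μ, w x ≠ ∞) :
    (∫⁻ x, f x ∂μ) ^ 2 ≤ (∫⁻ x, (w x)⁻¹ ∂μ) * ∫⁻ x, w x * f x ^ 2 ∂μ := by
  have hcancel : ∀ᵐ x ∂μ, (w x)⁻¹ * w x = 1 := by
    filter_upwards [hw0, hwt] with x h0 ht using ENNReal.inv_mul_cancel h0 ht
  have h1 : ∫⁻ x, (w x)⁻¹ * (w x * f x) ∂μ = ∫⁻ x, f x ∂μ := by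
    refine lintegral_congr_ae ?_
    filter_upwards [hcancel] with x hx
    rw [← mul_assoc, hx, one_mul]
  have h2 : ∫⁻ x, (w x)⁻¹ * (w x * f x) ^ 2 ∂μ = ∫⁻ x, w x * f x ^ 2 ∂μ := by
    refine lintegral_congr_ae ?_
    filter_upwards [hcancel] with x hx
    rw [mul_pow, sq (w x), ← mul_assoc, ← mul_assoc, hx, one_mul]
  simpa only [h1, h2] using
    sq_lintegral_mul_le (a := fun x => (w x)⁻¹) (b := fun x => w x * f x) hw.inv (hw.mul hf)

end CauchySchwarz

section Convolution
variable {G : Type*} [MeasurableSpace G] {μ : Measure G} {f g : G → ℝ≥0∞}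

section AddGroup
variable [AddGroup G] [MeasurableAdd₂ G] [MeasurableNeg G] [SFinite μ] [μ.IsAddLeftInvariant]

theorem lintegral_lconvolution_sq_le (hf : AEMeasurable f μ) (hg : AEMeasurable g μ) :
    ∫⁻ x, (f ⋆ₗ[μ] g) x ^ 2 ∂μ ≤ (∫⁻ x, f x ∂μ) ^ 2 * ∫⁻ x, g x ^ 2 ∂μ := by
  have inner (y : G) : ∫⁻ x, f y * g (-y + x) ^ 2 ∂μ = f y * ∫⁻ x, g x ^ 2 ∂μ := by
    have hgy : AEMeasurable (fun x => g (-y + x)) μ :=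
      hg.comp_quasiMeasurePreserving (measurePreserving_add_left μ (-y)).quasiMeasurePreserving
    rw [lintegral_const_mul'' _ (hgy.pow_const 2), lintegral_add_left_eq_self (g · ^ 2)]
  calc ∫⁻ x, (f ⋆ₗ[μ] g) x ^ 2 ∂μ
      ≤ ∫⁻ x, (∫⁻ y, f y ∂μ) * ∫⁻ y, f y * g (-y + x) ^ 2 ∂μ ∂μ :=
        lintegral_mono fun x => sq_lintegral_mul_le hf (by fun_prop)
    _ = (∫⁻ y, f y ∂μ) * ∫⁻ y, ∫⁻ x, f y * g (-y + x) ^ 2 ∂μ ∂μ := by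
        rw [lintegral_const_mul'' _ (by fun_prop), lintegral_lintegral_swap (by fun_prop)]
    _ = (∫⁻ x, f x ∂μ) ^ 2 * ∫⁻ x, g x ^ 2 ∂μ := by
        simp_rw [inner, lintegral_mul_const'' _ hf, sq, mul_assoc]

theorem mul_lconvolution_le {H U : G → ℝ≥0∞} {K : ℝ≥0∞} (hH : AEMeasurable H μ)
    (hU : AEMeasurable U μ) (hHU : ∀ x y, H x ≤ K * (U y + H (-y + x)))
    (hf : AEMeasurable f μ) (hg : AEMeasurable g μ) (x : G) :
    H x * (f ⋆ₗ[μ] g) x ≤ K * (((U * f) ⋆ₗ[μ] g) x + (f ⋆ₗ[μ] (H * g)) x) := by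
  have hHx : AEMeasurable (fun y => H (-y + x)) μ := by fun_prop
  simp only [lconvolution_def, Pi.mul_apply]
  calc H x * ∫⁻ y, f y * g (-y + x) ∂μ
      = ∫⁻ y, H x * (f y * g (-y + x)) ∂μ := (lintegral_const_mul'' _ (by fun_prop)).symm
    _ ≤ ∫⁻ y, K * (U y + H (-y + x)) * (f y * g (-y + x)) ∂μ :=
        lintegral_mono fun y => mul_le_mul_left (hHU x y) _
    _ = K * ∫⁻ y, U y * f y * g (-y + x) + f y * (H (-y + x) * g (-y + x)) ∂μ := by
        rw [← lintegral_const_mul'' _ (by fun_prop)]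
        congr 1 with y
        ring
    _ = K * ((∫⁻ y, U y * f y * g (-y + x) ∂μ) + ∫⁻ y, f y * (H (-y + x) * g (-y + x)) ∂μ) := by
        rw [lintegral_add_left' (by fun_prop)]

end AddGroup

variable [AddCommGroup G] [MeasurableAdd₂ G] [MeasurableNeg G] [SFinite μ] [μ.IsAddLeftInvariant]
  [μ.IsNegInvariant]

theorem lintegral_lconvolution_sq_le' (hf : AEMeasurable f μ) (hg : AEMeasurable g μ) :
    ∫⁻ x, (f ⋆ₗ[μ] g) x ^ 2 ∂μ ≤ (∫⁻ x, g x ∂μ) ^ 2 * ∫⁻ x, f x ^ 2 ∂μ := by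
  rw [lconvolution_comm]
  exact lintegral_lconvolution_sq_le hg hf

theorem lintegral_sq_mul_lconvolution_sq_le {H U : G → ℝ≥0∞} {K : ℝ≥0∞}
    (hH : AEMeasurable H μ) (hU : AEMeasurable U μ) (hHU : ∀ x y, H x ≤ K * (U y + H (-y + x)))
    (hf : AEMeasurable f μ) (hg : AEMeasurable g μ) :
    ∫⁻ x, H x ^ 2 * (f ⋆ₗ[μ] g) x ^ 2 ∂μ ≤ 2 * K ^ 2 *
      ((∫⁻ x, g x ∂μ) ^ 2 * ∫⁻ x, (U x * f x) ^ 2 ∂μ +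
        (∫⁻ x, f x ∂μ) ^ 2 * ∫⁻ x, (H x * g x) ^ 2 ∂μ) := by
  have hUf : AEMeasurable (U * f) μ := hU.mul hf
  have hHg : AEMeasurable (H * g) μ := hH.mul hg
  calc ∫⁻ x, H x ^ 2 * (f ⋆ₗ[μ] g) x ^ 2 ∂μ
      ≤ ∫⁻ x, 2 * K ^ 2 * (((U * f) ⋆ₗ[μ] g) x ^ 2 + (f ⋆ₗ[μ] (H * g)) x ^ 2) ∂μ := by
        refine lintegral_mono fun x => ?_
        calc H x ^ 2 * (f ⋆ₗ[μ] g) x ^ 2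
            ≤ (K * (((U * f) ⋆ₗ[μ] g) x + (f ⋆ₗ[μ] (H * g)) x)) ^ 2 := by
              rw [← mul_pow]; exact pow_le_pow_left' (mul_lconvolution_le hH hU hHU hf hg x) 2
          _ ≤ 2 * K ^ 2 * (((U * f) ⋆ₗ[μ] g) x ^ 2 + (f ⋆ₗ[μ] (H * g)) x ^ 2) := by
              rw [mul_pow, mul_comm 2, mul_assoc]; gcongr; exact ENNReal.add_sq_le _ _
    _ = 2 * K ^ 2 * (∫⁻ x, ((U * f) ⋆ₗ[μ] g) x ^ 2 ∂μ + ∫⁻ x, (f ⋆ₗ[μ] (H * g)) x ^ 2 ∂μ) := by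
        rw [lintegral_const_mul'' _ (by fun_prop), lintegral_add_left' (by fun_prop)]
    _ ≤ _ := by
        gcongr
        · exact lintegral_lconvolution_sq_le' hUf hg
        · exact lintegral_lconvolution_sq_le hf hHg

end Convolution

noncomputable def japaneseBracketRpow {E : Type*} [Norm E] (s : ℝ) (x : E) : ℝ≥0∞ :=
  ENNReal.ofReal ((1 + ‖x‖ ^ 2) ^ (s / 2))

section JapaneseBracket
variable {E : Type*} [SeminormedAddGroup E] {s : ℝ}

theorem japaneseBracketRpow_sq (x : E) :
    japaneseBracketRpow s x ^ 2 = ENNReal.ofReal ((1 + ‖x‖ ^ 2) ^ s) := by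
  rw [japaneseBracketRpow, ← ENNReal.ofReal_pow (by positivity), ← Real.rpow_natCast,
    ← Real.rpow_mul (by positivity)]
  norm_num

theorem measurable_japaneseBracketRpow [MeasurableSpace E] [OpensMeasurableSpace E] :
    Measurable (japaneseBracketRpow (E := E) s) := by
  unfold japaneseBracketRpow
  fun_prop

theorem japaneseBracketRpow_le_of_le (hs : 0 ≤ s) {x z : E}
    (h : 1 + ‖x‖ ^ 2 ≤ 4 * (1 + ‖z‖ ^ 2)) :
    japaneseBracketRpow s x ≤ ENNReal.ofReal (2 ^ s) * japaneseBracketRpow s z := by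
  rw [japaneseBracketRpow, japaneseBracketRpow, ← ENNReal.ofReal_mul (by positivity)]
  refine ENNReal.ofReal_le_ofReal ?_
  calc (1 + ‖x‖ ^ 2) ^ (s / 2) ≤ (4 * (1 + ‖z‖ ^ 2)) ^ (s / 2) := by gcongr
    _ = 2 ^ s * (1 + ‖z‖ ^ 2) ^ (s / 2) := by
        rw [Real.mul_rpow (by norm_num) (by positivity), show (4 : ℝ) = 2 ^ (2 : ℝ) by norm_num,
          ← Real.rpow_mul zero_le_two]
        ring_nf

theorem one_add_sq_norm_le_four_mul (x y : E) :
    1 + ‖x‖ ^ 2 ≤ 4 * (1 + ‖-y + x‖ ^ 2) ∨ 1 ≤ ‖y‖ ∧ 1 + ‖x‖ ^ 2 ≤ 4 * (1 + ‖y‖ ^ 2) := by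
  have htri : ‖x‖ ≤ ‖y‖ + ‖-y + x‖ := by
    simpa only [add_neg_cancel_left] using norm_add_le y (-y + x)
  have hxy := norm_nonneg (-y + x)
  rcases lt_or_ge ‖y‖ 1 with hy | hy
  · have hx : ‖x‖ ≤ 1 + ‖-y + x‖ := by linarith
    left; nlinarith [mul_self_le_mul_self (norm_nonneg x) hx, sq_nonneg (‖-y + x‖ - 1)]
  rcases le_total ‖y‖ ‖-y + x‖ with h | h
  · left; nlinarith [norm_nonneg y, norm_nonneg x]
  · right; exact ⟨hy, by nlinarith [norm_nonneg y, norm_nonneg x]⟩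

theorem japaneseBracketRpow_le (hs : 0 ≤ s) (x y : E) :
    japaneseBracketRpow s x ≤ ENNReal.ofReal (2 ^ s) *
      ({y | 1 ≤ ‖y‖}.indicator (japaneseBracketRpow s) y + japaneseBracketRpow s (-y + x)) := by
  rcases one_add_sq_norm_le_four_mul x y with h | ⟨hy, h⟩
  · exact (japaneseBracketRpow_le_of_le hs h).trans (by gcongr; exact le_add_self)
  · rw [Set.indicator_of_mem (show y ∈ {y : E | 1 ≤ ‖y‖} from hy)]
    exact (japaneseBracketRpow_le_of_le hs h).trans (by gcongr; exact le_self_add)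

end JapaneseBracket

open ProbabilityTheory in
theorem lintegral_div_sq_add_sq_le {q : ℝ} (hq : 0 ≤ q) :
    ∫⁻ t : ℝ, ENNReal.ofReal (q / (t ^ 2 + q ^ 2)) ≤ ENNReal.ofReal Real.pi := by
  lift q to ℝ≥0 using hq
  rcases eq_or_ne q 0 with rfl | hq
  · simp
  have hcauchy (t : ℝ) :
      ENNReal.ofReal (q / (t ^ 2 + q ^ 2)) = ENNReal.ofReal Real.pi * cauchyPDF 0 q t := by
    have : (q : ℝ) ≠ 0 := by exact_mod_cast hq
    rw [cauchyPDF, ← ENNReal.ofReal_mul Real.pi_pos.le, cauchyPDFReal_def', NNReal.coe_inv]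
    congr 1
    field_simp
    ring
  simp_rw [hcauchy, lintegral_const_mul _ (measurable_cauchyPDF 0 q),
    lintegral_cauchyPDF_eq_one 0 hq, mul_one, le_refl]

theorem lintegral_euclideanSpace_fin_succ {n : ℕ} (g : ℝ → (Fin n → ℝ) → ℝ≥0∞) :
    ∫⁻ ξ : EuclideanSpace ℝ (Fin (n + 1)), g (ξ 0) (fun j => ξ j.succ) =
      ∫⁻ p : ℝ × (Fin n → ℝ), g p.1 p.2 := by
  let e := MeasurableEquiv.piFinSuccAbove (fun _ : Fin (n + 1) => ℝ) 0
  rw [← (volume_preserving_piFinSuccAbove (fun _ : Fin (n + 1) => ℝ) 0).lintegral_comp_emb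
    e.measurableEmbedding, ← (PiLp.volume_preserving_ofLp (Fin (n + 1))).lintegral_comp_emb
    (MeasurableEquiv.toLp 2 (Fin (n + 1) → ℝ)).symm.measurableEmbedding]
  rfl

noncomputable def cubeCauchyWeight {n : ℕ} (t : ℝ) (y : Fin n → ℝ) : ℝ≥0∞ :=
  if ‖y‖ ≤ 1 then ENNReal.ofReal ((∑ j, y j ^ 2) / (t ^ 2 + (∑ j, y j ^ 2) ^ 2)) else 0

theorem lintegral_cubeCauchyWeight_lt_top {n : ℕ} :
    ∫⁻ p : ℝ × (Fin n → ℝ), cubeCauchyWeight p.1 p.2 < ∞ := by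
  have hmeas : Measurable fun p : ℝ × (Fin n → ℝ) => cubeCauchyWeight p.1 p.2 :=
    Measurable.ite (measurableSet_le (by fun_prop) measurable_const) (by fun_prop) measurable_const
  rw [Measure.volume_eq_prod, lintegral_prod_symm _ hmeas.aemeasurable]
  calc ∫⁻ y, ∫⁻ t, cubeCauchyWeight t y
      ≤ ∫⁻ y, (Metric.closedBall (0 : Fin n → ℝ) 1).indicator
          (fun _ => ENNReal.ofReal Real.pi) y := by
        refine lintegral_mono fun y => ?_
        by_cases hy : ‖y‖ ≤ 1
        · simpa [cubeCauchyWeight, hy] using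
            lintegral_div_sq_add_sq_le (Finset.sum_nonneg fun j _ => sq_nonneg (y j))
        · simp [cubeCauchyWeight, hy]
    _ < ∞ := by
        rw [lintegral_indicator_const Metric.isClosed_closedBall.measurableSet]
        exact ENNReal.mul_lt_top ENNReal.ofReal_lt_top measure_closedBall_lt_top

theorem lintegral_inv_japaneseBracketRpow_sq_lt_top {E : Type*} [NormedAddCommGroup E]
    [NormedSpace ℝ E] [FiniteDimensional ℝ E] [MeasurableSpace E] [BorelSpace E] (μ : Measure E)
    [μ.IsAddHaarMeasure] {s : ℝ} (hs : (Module.finrank ℝ E : ℝ) < 2 * s) :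
    ∫⁻ x, (japaneseBracketRpow s x ^ 2)⁻¹ ∂μ < ∞ := by
  have h (x : E) : (japaneseBracketRpow s x ^ 2)⁻¹ =
      ENNReal.ofReal ((1 + ‖x‖ ^ 2) ^ (-(2 * s) / 2)) := by
    rw [japaneseBracketRpow_sq, ← ENNReal.ofReal_inv_of_pos (by positivity),
      ← Real.rpow_neg (by positivity)]
    ring_nf
  simp_rw [h]
  exact (integrable_rpow_neg_one_add_norm_sq (μ := μ) hs).lintegral_lt_top

theorem div_add_sq_le_one_add_div {a q : ℝ} (ha : 0 ≤ a) (hq : 0 ≤ q) :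
    (a + q) / (a + (a + q) ^ 2) ≤ 1 + q / (a + q ^ 2) := by
  rcases (add_nonneg ha (sq_nonneg q)).eq_or_lt with h | h
  · obtain ⟨rfl, rfl⟩ : a = 0 ∧ q = 0 := by constructor <;> nlinarith
    norm_num
  calc (a + q) / (a + (a + q) ^ 2) ≤ (a + q) / (a + q ^ 2) :=
        div_le_div_of_nonneg_left (by positivity) h (by nlinarith)
    _ = a / (a + q ^ 2) + q / (a + q ^ 2) := add_div _ _ _
    _ ≤ 1 + q / (a + q ^ 2) := by
        gcongr
        exact div_le_one_of_le₀ (by nlinarith) h.le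

section omegaD
variable {d : ℕ} (hd : 0 < d) {s : ℝ} {ξ : EuclideanSpace ℝ (Fin d)}

theorem omegaD_of_one_le_norm (hξ : 1 ≤ ‖ξ‖) : omegaD d hd s ξ = (1 + ‖ξ‖ ^ 2) ^ s := by
  rw [omegaD, if_neg hξ.not_gt]

theorem omegaD_pos (hξ : ξ ≠ 0) : 0 < omegaD d hd s ξ := by
  have := norm_pos_iff.mpr hξ
  unfold omegaD
  split_ifs <;> positivity

theorem indicator_japaneseBracketRpow_sq_le_omegaD (ξ : EuclideanSpace ℝ (Fin d)) :
    {ξ : EuclideanSpace ℝ (Fin d) | 1 ≤ ‖ξ‖}.indicator (japaneseBracketRpow s) ξ ^ 2 ≤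
      ENNReal.ofReal (omegaD d hd s ξ) := by
  by_cases hξ : 1 ≤ ‖ξ‖
  · rw [Set.indicator_of_mem (show ξ ∈ {ξ | 1 ≤ ‖ξ‖} from hξ), japaneseBracketRpow_sq,
      omegaD_of_one_le_norm hd hξ]
  · simp [hξ]

theorem measurable_omegaD : Measurable (omegaD d hd s) := by
  unfold omegaD
  refine Measurable.ite (measurableSet_lt measurable_norm measurable_const) ?_ (by fun_prop)
  have : Measurable fun ξ : EuclideanSpace ℝ (Fin d) => ξ ⟨0, hd⟩ := by fun_prop
  fun_prop

theorem inv_omegaD_le {n : ℕ} (hn : 0 < n + 1) {ξ : EuclideanSpace ℝ (Fin (n + 1))}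
    (hξ : ξ ≠ 0) :
    (ENNReal.ofReal (omegaD (n + 1) hn s ξ))⁻¹ ≤ (japaneseBracketRpow s ξ ^ 2)⁻¹ +
      (Metric.closedBall 0 1).indicator 1 ξ + cubeCauchyWeight (ξ 0) (fun j => ξ j.succ) := by
  rcases lt_or_ge ‖ξ‖ 1 with hlt | hge
  · have hnorm : ‖ξ‖ ^ 2 = ξ 0 ^ 2 + ∑ j : Fin n, ξ j.succ ^ 2 := by
      rw [EuclideanSpace.real_norm_sq_eq, Fin.sum_univ_succ]
    have hy : ‖fun j : Fin n => ξ j.succ‖ ≤ 1 :=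
      (pi_norm_le_iff_of_nonneg zero_le_one).mpr fun j => (PiLp.norm_apply_le ξ _).trans hlt.le
    have hω : (ENNReal.ofReal (omegaD (n + 1) hn s ξ))⁻¹ =
        ENNReal.ofReal (‖ξ‖ ^ 2 / (ξ 0 ^ 2 + (‖ξ‖ ^ 2) ^ 2)) := by
      rw [← ENNReal.ofReal_inv_of_pos (omegaD_pos hn hξ), omegaD, if_pos hlt, inv_div, ← pow_mul]
      rfl
    rw [hω, Set.indicator_of_mem (Metric.mem_closedBall.mpr (by simpa using hlt.le)),
      cubeCauchyWeight, if_pos hy, Pi.one_apply, add_assoc, ← ENNReal.ofReal_one,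
      ← ENNReal.ofReal_add zero_le_one (by positivity), hnorm]
    exact le_add_left (ENNReal.ofReal_le_ofReal (div_add_sq_le_one_add_div (sq_nonneg _)
      (by positivity)))
  · rw [omegaD_of_one_le_norm hn hge, ← japaneseBracketRpow_sq, add_assoc]
    exact le_self_add

theorem lintegral_inv_omegaD_lt_top (hs : (d : ℝ) / 2 < s) :
    ∫⁻ ξ, (ENNReal.ofReal (omegaD d hd s ξ))⁻¹ < ∞ := by
  obtain ⟨n, rfl⟩ := Nat.exists_eq_add_one_of_ne_zero hd.ne'
  have hball := measurableSet_closedBall (x := (0 : EuclideanSpace ℝ (Fin (n + 1)))) (ε := 1)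
  have hH : Measurable (japaneseBracketRpow (E := EuclideanSpace ℝ (Fin (n + 1))) s) :=
    measurable_japaneseBracketRpow
  calc ∫⁻ ξ, (ENNReal.ofReal (omegaD (n + 1) hd s ξ))⁻¹
      ≤ ∫⁻ ξ : EuclideanSpace ℝ (Fin (n + 1)),
          (japaneseBracketRpow s ξ ^ 2)⁻¹ + (Metric.closedBall 0 1).indicator 1 ξ +
          cubeCauchyWeight (ξ 0) (fun j => ξ j.succ) :=
        lintegral_mono_ae ((volume.ae_ne 0).mono fun ξ hξ => inv_omegaD_le hd hξ)
    _ = (∫⁻ ξ : EuclideanSpace ℝ (Fin (n + 1)), (japaneseBracketRpow s ξ ^ 2)⁻¹) +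
          volume (Metric.closedBall (0 : EuclideanSpace ℝ (Fin (n + 1))) 1) +
          ∫⁻ p : ℝ × (Fin n → ℝ), cubeCauchyWeight p.1 p.2 := by
        rw [lintegral_add_left (by fun_prop), lintegral_add_left (by fun_prop),
          lintegral_indicator_one hball, lintegral_euclideanSpace_fin_succ]
    _ < ∞ := by
        refine ENNReal.add_lt_top.mpr ⟨ENNReal.add_lt_top.mpr ⟨?_, measure_closedBall_lt_top⟩,
          lintegral_cubeCauchyWeight_lt_top⟩
        refine lintegral_inv_japaneseBracketRpow_sq_lt_top volume ?_
        rw [finrank_euclideanSpace_fin]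
        linarith

end omegaD

theorem exists_lintegral_sq_mul_lconvolution_sq_le {d : ℕ} (hd : 0 < d) {s : ℝ}
    (hs : (d : ℝ) / 2 < s) :
    ∃ C : ℝ≥0∞, C ≠ ∞ ∧ ∀ φ γ : EuclideanSpace ℝ (Fin d) → ℝ≥0∞,
      AEMeasurable φ → AEMeasurable γ →
        ∫⁻ ξ, japaneseBracketRpow s ξ ^ 2 * (φ ⋆ₗ γ) ξ ^ 2 ≤
          C * (∫⁻ ξ, ENNReal.ofReal (omegaD d hd s ξ) * φ ξ ^ 2) *
            ∫⁻ ξ, japaneseBracketRpow s ξ ^ 2 * γ ξ ^ 2 := by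
  have hs0 : 0 ≤ s := le_trans (by positivity) hs.le
  have : Nonempty (Fin d) := ⟨⟨0, hd⟩⟩
  set H := japaneseBracketRpow (E := EuclideanSpace ℝ (Fin d)) s
  set U := {ξ : EuclideanSpace ℝ (Fin d) | 1 ≤ ‖ξ‖}.indicator H
  have hH : Measurable H := measurable_japaneseBracketRpow
  have hU : Measurable U := hH.indicator (measurableSet_le measurable_const measurable_norm)
  have hΩ : Measurable fun ξ => ENNReal.ofReal (omegaD d hd s ξ) :=
    (measurable_omegaD hd).ennreal_ofReal
  have hMH : ∫⁻ ξ, (H ξ ^ 2)⁻¹ ≠ ∞ := by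
    refine (lintegral_inv_japaneseBracketRpow_sq_lt_top volume ?_).ne
    rw [finrank_euclideanSpace_fin]
    linarith
  have hMΩ := (lintegral_inv_omegaD_lt_top hd hs).ne
  refine ⟨2 * ENNReal.ofReal (2 ^ s) ^ 2 *
    ((∫⁻ ξ, (H ξ ^ 2)⁻¹) + ∫⁻ ξ, (ENNReal.ofReal (omegaD d hd s ξ))⁻¹), by
      simp [ENNReal.mul_eq_top, hMH, hMΩ], fun φ γ hφ hγ => ?_⟩
  have hγ1 : (∫⁻ ξ, γ ξ) ^ 2 ≤ (∫⁻ ξ, (H ξ ^ 2)⁻¹) * ∫⁻ ξ, H ξ ^ 2 * γ ξ ^ 2 :=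
    sq_lintegral_le_lintegral_inv_mul (hH.pow_const 2).aemeasurable hγ
      (ae_of_all _ fun ξ => by simp [H, japaneseBracketRpow]; positivity)
      (ae_of_all _ fun ξ => by simp [H, japaneseBracketRpow])
  have hφ1 : (∫⁻ ξ, φ ξ) ^ 2 ≤ (∫⁻ ξ, (ENNReal.ofReal (omegaD d hd s ξ))⁻¹) *
      ∫⁻ ξ, ENNReal.ofReal (omegaD d hd s ξ) * φ ξ ^ 2 :=
    sq_lintegral_le_lintegral_inv_mul hΩ.aemeasurable hφ
      ((volume.ae_ne 0).mono fun ξ hξ => by simpa using omegaD_pos hd hξ)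
      (ae_of_all _ fun _ => ENNReal.ofReal_ne_top)
  have hUφ : ∫⁻ ξ, U ξ ^ 2 * φ ξ ^ 2 ≤ ∫⁻ ξ, ENNReal.ofReal (omegaD d hd s ξ) * φ ξ ^ 2 :=
    lintegral_mono fun ξ => by gcongr; exact indicator_japaneseBracketRpow_sq_le_omegaD hd ξ
  calc ∫⁻ ξ, H ξ ^ 2 * (φ ⋆ₗ γ) ξ ^ 2
      ≤ 2 * ENNReal.ofReal (2 ^ s) ^ 2 * ((∫⁻ ξ, γ ξ) ^ 2 * (∫⁻ ξ, U ξ ^ 2 * φ ξ ^ 2) +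
          (∫⁻ ξ, φ ξ) ^ 2 * ∫⁻ ξ, H ξ ^ 2 * γ ξ ^ 2) := by
        simpa only [mul_pow] using lintegral_sq_mul_lconvolution_sq_le hH.aemeasurable
          hU.aemeasurable (japaneseBracketRpow_le hs0) hφ hγ
    _ ≤ 2 * ENNReal.ofReal (2 ^ s) ^ 2 *
          ((∫⁻ ξ, (H ξ ^ 2)⁻¹) * (∫⁻ ξ, H ξ ^ 2 * γ ξ ^ 2) *
              (∫⁻ ξ, ENNReal.ofReal (omegaD d hd s ξ) * φ ξ ^ 2) +
            (∫⁻ ξ, (ENNReal.ofReal (omegaD d hd s ξ))⁻¹) *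
              (∫⁻ ξ, ENNReal.ofReal (omegaD d hd s ξ) * φ ξ ^ 2) * ∫⁻ ξ, H ξ ^ 2 * γ ξ ^ 2) := by
        gcongr _ * (?_ * ?_ + ?_ * _)
    _ = _ := by ring

/-- Fourier side: `F = f̂`, `G = ĝ`, and `(fg)^ = F ∗ G`; the norms are squared. -/
theorem stmt_14 (d : ℕ) (hd : 0 < d) (s : ℝ) (hs : (d : ℝ) / 2 < s) :
    ∃ c : ℝ, 0 < c ∧
      ∀ F G : EuclideanSpace ℝ (Fin d) → ℂ, AEMeasurable F → AEMeasurable G →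
        (∫⁻ ξ, ENNReal.ofReal ((1 + ‖ξ‖ ^ 2) ^ s) *
            (‖∫ z, F z * G (ξ - z)‖₊ : ℝ≥0∞) ^ 2)
          ≤ ENNReal.ofReal (c ^ 2) *
              (∫⁻ ξ, ENNReal.ofReal (omegaD d hd s ξ) * (‖F ξ‖₊ : ℝ≥0∞) ^ 2) *
              (∫⁻ ξ, ENNReal.ofReal ((1 + ‖ξ‖ ^ 2) ^ s) * (‖G ξ‖₊ : ℝ≥0∞) ^ 2) := by
  obtain ⟨C, hC, hbound⟩ := exists_lintegral_sq_mul_lconvolution_sq_le hd hs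
  refine ⟨√(C.toReal + 1), by positivity, fun F G hF hG => ?_⟩
  have hCc : C ≤ ENNReal.ofReal (√(C.toReal + 1) ^ 2) := by
    rw [Real.sq_sqrt (by positivity), ← ENNReal.ofReal_toReal hC]
    exact ENNReal.ofReal_le_ofReal (by simp)
  have hconv (ξ) : ‖∫ z, F z * G (ξ - z)‖ₑ ≤ ((‖F ·‖ₑ) ⋆ₗ (‖G ·‖ₑ)) ξ := by
    simpa [lconvolution_def, neg_add_eq_sub, enorm_mul] using
      enorm_integral_le_lintegral_enorm (fun z => F z * G (ξ - z))
  simp only [← enorm_eq_nnnorm, ← japaneseBracketRpow_sq]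
  calc ∫⁻ ξ, japaneseBracketRpow s ξ ^ 2 * ‖∫ z, F z * G (ξ - z)‖ₑ ^ 2
      ≤ ∫⁻ ξ, japaneseBracketRpow s ξ ^ 2 * ((‖F ·‖ₑ) ⋆ₗ (‖G ·‖ₑ)) ξ ^ 2 := by
        gcongr with ξ; exact hconv ξ
    _ ≤ _ := hbound _ _ hF.enorm hG.enorm
    _ ≤ _ := by gcongr
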